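/- For every continuous compactly supported function φ: ℝ → ℝ and every y ≠ 0, one has the delta-approximation property lim_{t→0⁺} ∫_ℝ G(t,x,y)·φ(x)·ρ(x) dx = φ(y)·ρ(y), where ρ(x) = ρ₁ for x ≤ 0 and ρ(x) = ρ₂ for x > 0. -/

import Mathlib

open Real Set Filter MeasureTheory

noncomputable def fPiece (a₁ a₂ y : ℝ) : ℝ :=
  if y ≤ 0 then y / Real.sqrt a₁ else y / Real.sqrt a₂

noncomputable def signFun (y : ℝ) : ℝ :=
  if 0 < y then 1 else if y < 0 then -1 else 0

noncomputable def G (a₁ a₂ β t x y : ℝ) : ℝ :=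
  (1 / Real.sqrt (2 * Real.pi * t)) *
    (if y ≤ 0 then 1 / Real.sqrt a₁ else 1 / Real.sqrt a₂) *
    (Real.exp (-(fPiece a₁ a₂ x - fPiece a₁ a₂ y) ^ 2 / (2 * t)) +
      β * signFun y * Real.exp (-(|fPiece a₁ a₂ x| + |fPiece a₁ a₂ y|) ^ 2 / (2 * t)))

noncomputable def rhoFun (ρ₁ ρ₂ x : ℝ) : ℝ := if x ≤ 0 then ρ₁ else ρ₂

/-! On the side of the interface containing `y`, `fPiece` is linear with slope `1 / √D`, where
`D = diffusivity a₁ a₂ y`, so there the direct term of `G t · y` is exactly the heat kernel of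
variance `D t` centred at `y`. At the other points, and for the reflected term at every point,
the squared distance in the Gaussian is at least `fPiece y ^ 2`. Hence `G t x y` differs from
`heatKernel (D t) (x - y)` by at most `(1 + |β|) * heatKernel (D t) y` uniformly in `x`, and this
tends to `0` because `y ≠ 0`. The heat kernel is an approximate identity, and `φ ρ` is integrable
and continuous at `y`. -/

open scoped Topology

noncomputable def heatKernel (t x : ℝ) : ℝ := (√(2 * π * t))⁻¹ * exp (-x ^ 2 / (2 * t))

lemma heatKernel_one : heatKernel 1 = ProbabilityTheory.gaussianPDFReal 0 1 := by
  ext x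
  simp [heatKernel, ProbabilityTheory.gaussianPDFReal_def]

lemma continuous_heatKernel (t : ℝ) : Continuous (heatKernel t) := by
  unfold heatKernel
  fun_prop

lemma heatKernel_nonneg (t x : ℝ) : 0 ≤ heatKernel t x := by
  unfold heatKernel
  positivity

lemma heatKernel_le {t : ℝ} (ht : 0 < t) (x : ℝ) : heatKernel t x ≤ (√(2 * π * t))⁻¹ := by
  unfold heatKernel
  refine mul_le_of_le_one_right (by positivity) (exp_le_one_iff.2 ?_)
  exact div_nonpos_of_nonpos_of_nonneg (by nlinarith) (by linarith)

lemma heatKernel_mul_eq {D t : ℝ} (hD : 0 < D) (ht : 0 < t) (z : ℝ) :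
    heatKernel (D * t) z = (√(2 * π * t))⁻¹ * (√D)⁻¹ * exp (-(z / √D) ^ 2 / (2 * t)) := by
  rw [heatKernel, div_pow, Real.sq_sqrt hD.le, show 2 * π * (D * t) = 2 * π * t * D by ring,
    Real.sqrt_mul (by positivity), mul_inv]
  congr 2
  field_simp

lemma tendsto_sqrt_mul_exp_neg_half_atTop :
    Tendsto (fun u : ℝ => √u * exp (-u / 2)) atTop (𝓝 0) := by
  refine (tendsto_rpow_mul_exp_neg_mul_atTop_nhds_zero (1 / 2) (1 / 2) one_half_pos).congr
    fun u => ?_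
  rw [← Real.sqrt_eq_rpow]
  ring_nf

lemma tendsto_heatKernel_nhdsGT_zero {y : ℝ} (hy : y ≠ 0) :
    Tendsto (fun t => heatKernel t y) (𝓝[>] 0) (𝓝 0) := by
  have h := (tendsto_sqrt_mul_exp_neg_half_atTop.comp
    (tendsto_inv_nhdsGT_zero.const_mul_atTop (pow_pos (abs_pos.2 hy) 2))).const_mul
    ((√(2 * π))⁻¹ * |y|⁻¹)
  rw [mul_zero] at h
  refine h.congr' ?_
  filter_upwards [self_mem_nhdsWithin] with t (ht : 0 < t)
  simp only [Function.comp_apply, heatKernel, sq_abs]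
  rw [Real.sqrt_mul (by positivity), Real.sqrt_mul' _ (by positivity), Real.sqrt_sq_eq_abs,
    Real.sqrt_inv, Real.sqrt_mul (by positivity), Real.sqrt_mul zero_le_two]
  field_simp

-- The form used by `tendsto_integral_comp_smul_smul_of_integrable'`; the exponent is `finrank ℝ ℝ`.
lemma heatKernel_sub_eq_rescale {t : ℝ} (ht : 0 < t) (x y : ℝ) :
    heatKernel t (x - y) = (√t)⁻¹ ^ 1 * heatKernel 1 ((√t)⁻¹ • (y - x)) := by
  simp only [heatKernel, smul_eq_mul, pow_one, mul_one]
  rw [Real.sqrt_mul (by positivity), mul_inv, mul_pow, inv_pow, Real.sq_sqrt ht.le]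
  field_simp
  ring_nf

theorem tendsto_integral_heatKernel_mul {g : ℝ → ℝ} {y : ℝ} (hg : Integrable g)
    (hgy : ContinuousAt g y) :
    Tendsto (fun t => ∫ x, heatKernel t (x - y) * g x) (𝓝[>] 0) (𝓝 (g y)) := by
  have hdecay : Tendsto (fun x : ℝ => ‖x‖ ^ Module.finrank ℝ ℝ * heatKernel 1 x)
      (Bornology.cobounded ℝ) (𝓝 0) := by
    have h := (tendsto_sqrt_mul_exp_neg_half_atTop.comp
      ((tendsto_pow_atTop two_ne_zero).comp (tendsto_norm_cobounded_atTop (E := ℝ)))).const_mul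
      (√(2 * π))⁻¹
    rw [mul_zero] at h
    refine h.congr fun x => ?_
    simp only [Function.comp_apply, heatKernel, Module.finrank_self, pow_one, Real.norm_eq_abs,
      sq_abs, Real.sqrt_sq_eq_abs, mul_one]
    ring
  have hpeak := tendsto_integral_comp_smul_smul_of_integrable' (μ := volume)
    (heatKernel_nonneg 1)
    (by rw [heatKernel_one]; exact ProbabilityTheory.integral_gaussianPDFReal_eq_one 0 one_ne_zero)
    hdecay hg hgy
  have hscale : Tendsto (fun t : ℝ => (√t)⁻¹) (𝓝[>] 0) atTop := by
    refine (Real.tendsto_sqrt_atTop.comp tendsto_inv_nhdsGT_zero).congr fun t => ?_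
    simp [Real.sqrt_inv]
  refine (hpeak.comp hscale).congr' ?_
  filter_upwards [self_mem_nhdsWithin] with t (ht : 0 < t)
  simp only [Function.comp_apply, Module.finrank_self, smul_eq_mul]
  congr 1 with x
  rw [heatKernel_sub_eq_rescale ht]
  simp

theorem tendsto_integral_mul_of_abs_le {ι α : Type*} [MeasurableSpace α] {μ : Measure α}
    {l : Filter ι} {E : ι → α → ℝ} {M : ι → ℝ} {g : α → ℝ}
    (hE : ∀ᶠ i in l, ∀ x, |E i x| ≤ M i) (hM : Tendsto M l (𝓝 0)) (hg : Integrable g μ) :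
    Tendsto (fun i => ∫ x, E i x * g x ∂μ) l (𝓝 0) := by
  have hbound : Tendsto (fun i => M i * ∫ x, ‖g x‖ ∂μ) l (𝓝 0) := by
    simpa using hM.mul_const (∫ x, ‖g x‖ ∂μ)
  refine squeeze_zero_norm' ?_ hbound
  filter_upwards [hE] with i hi
  rw [← integral_const_mul]
  refine norm_integral_le_of_norm_le (hg.norm.const_mul (M i)) (ae_of_all _ fun x => ?_)
  rw [norm_mul, Real.norm_eq_abs]
  exact mul_le_mul_of_nonneg_right (hi x) (norm_nonneg _)

lemma abs_le_abs_sub_of_mul_nonpos {a b : ℝ} (h : a * b ≤ 0) : |b| ≤ |a - b| :=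
  sq_le_sq.1 (by nlinarith)

lemma exp_neg_sq_div_le {a b t : ℝ} (ht : 0 < t) (h : |b| ≤ |a|) :
    exp (-a ^ 2 / (2 * t)) ≤ exp (-b ^ 2 / (2 * t)) :=
  exp_le_exp.2 (div_le_div_of_nonneg_right (neg_le_neg (sq_le_sq.2 h)) (by positivity))

lemma le_zero_iff_le_zero_or_mul_nonpos (x y : ℝ) : (x ≤ 0 ↔ y ≤ 0) ∨ x * y ≤ 0 := by
  rcases le_or_gt x 0 with hx | hx <;> rcases le_or_gt y 0 with hy | hy
  · exact Or.inl (iff_of_true hx hy)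
  · exact Or.inr (mul_nonpos_of_nonpos_of_nonneg hx hy.le)
  · exact Or.inr (mul_nonpos_of_nonneg_of_nonpos hx.le hy)
  · exact Or.inl (iff_of_false hx.not_ge hy.not_ge)

noncomputable def diffusivity (a₁ a₂ y : ℝ) : ℝ := if y ≤ 0 then a₁ else a₂

lemma diffusivity_pos {a₁ a₂ : ℝ} (ha₁ : 0 < a₁) (ha₂ : 0 < a₂) (y : ℝ) :
    0 < diffusivity a₁ a₂ y := by
  unfold diffusivity
  split_ifs <;> assumption

lemma fPiece_eq_div (a₁ a₂ y : ℝ) : fPiece a₁ a₂ y = y / √(diffusivity a₁ a₂ y) := by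
  unfold fPiece diffusivity
  split_ifs <;> rfl

lemma fPiece_sub_fPiece_of_le_zero_iff (a₁ a₂ : ℝ) {x y : ℝ} (h : x ≤ 0 ↔ y ≤ 0) :
    fPiece a₁ a₂ x - fPiece a₁ a₂ y = (x - y) / √(diffusivity a₁ a₂ y) := by
  rw [fPiece_eq_div, fPiece_eq_div, sub_div]
  simp only [diffusivity, h]

lemma fPiece_mul_fPiece_nonpos (a₁ a₂ : ℝ) {x y : ℝ} (h : x * y ≤ 0) :
    fPiece a₁ a₂ x * fPiece a₁ a₂ y ≤ 0 := by
  rw [fPiece_eq_div, fPiece_eq_div, div_mul_div_comm]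
  exact div_nonpos_of_nonpos_of_nonneg h (by positivity)

lemma abs_signFun_le_one (y : ℝ) : |signFun y| ≤ 1 := by
  unfold signFun
  split_ifs <;> norm_num

lemma measurable_fPiece (a₁ a₂ : ℝ) : Measurable (fPiece a₁ a₂) :=
  Measurable.ite measurableSet_Iic (measurable_id.div_const _) (measurable_id.div_const _)

lemma measurable_G (a₁ a₂ β t y : ℝ) : Measurable (fun x => G a₁ a₂ β t x y) := by
  have := measurable_fPiece a₁ a₂
  unfold G
  fun_prop

theorem abs_G_sub_heatKernel_le {a₁ a₂ t : ℝ} (ha₁ : 0 < a₁) (ha₂ : 0 < a₂) (ht : 0 < t)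
    (β x y : ℝ) :
    |G a₁ a₂ β t x y - heatKernel (diffusivity a₁ a₂ y * t) (x - y)| ≤
      (1 + |β|) * heatKernel (diffusivity a₁ a₂ y * t) y := by
  set D := diffusivity a₁ a₂ y
  have hD : 0 < D := diffusivity_pos ha₁ ha₂ y
  set P := (√(2 * π * t))⁻¹ * (√D)⁻¹
  set u := fPiece a₁ a₂ x
  set v := fPiece a₁ a₂ y
  set e : ℝ → ℝ := fun z => exp (-z ^ 2 / (2 * t))
  have hv : v = y / √D := fPiece_eq_div a₁ a₂ y
  have hG : G a₁ a₂ β t x y = P * (e (u - v) + β * signFun y * e (|u| + |v|)) := by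
    have hpre : (if y ≤ 0 then 1 / √a₁ else 1 / √a₂) = (√D)⁻¹ := by
      simp only [D, diffusivity]
      split_ifs <;> rw [one_div]
    rw [G, hpre, one_div]
  have hdiff : |e (u - v) - e ((x - y) / √D)| ≤ e v := by
    rcases le_zero_iff_le_zero_or_mul_nonpos x y with hside | hside
    · rw [fPiece_sub_fPiece_of_le_zero_iff a₁ a₂ hside, sub_self, abs_zero]
      exact (exp_pos _).le
    · refine abs_sub_le_of_nonneg_of_le (exp_pos _).le
        (exp_neg_sq_div_le ht (abs_le_abs_sub_of_mul_nonpos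
          (fPiece_mul_fPiece_nonpos a₁ a₂ hside))) (exp_pos _).le
        (exp_neg_sq_div_le ht ?_)
      rw [hv, abs_div, abs_div]
      exact div_le_div_of_nonneg_right (abs_le_abs_sub_of_mul_nonpos hside) (abs_nonneg _)
  have hrefl : |β * signFun y * e (|u| + |v|)| ≤ |β| * e v := by
    rw [abs_mul, abs_mul, abs_of_pos (exp_pos _)]
    refine mul_le_mul (mul_le_of_le_one_right (abs_nonneg β) (abs_signFun_le_one y))
      (exp_neg_sq_div_le ht ?_) (exp_pos _).le (abs_nonneg β)
    rw [abs_of_nonneg (by positivity : 0 ≤ |u| + |v|)]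
    exact le_add_of_nonneg_left (abs_nonneg u)
  rw [hG, heatKernel_mul_eq hD ht, heatKernel_mul_eq hD ht, ← hv, ← mul_sub,
    abs_mul, abs_of_nonneg (by positivity : 0 ≤ P)]
  calc P * |e (u - v) + β * signFun y * e (|u| + |v|) - e ((x - y) / √D)|
      ≤ P * (|e (u - v) - e ((x - y) / √D)| + |β * signFun y * e (|u| + |v|)|) := by
        gcongr
        calc _ = |(e (u - v) - e ((x - y) / √D)) + β * signFun y * e (|u| + |v|)| := by
              congr 1; ring
          _ ≤ _ := abs_add_le _ _
    _ ≤ (1 + |β|) * (P * e v) := by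
        nlinarith [(by positivity : 0 ≤ P)]

lemma continuousAt_rhoFun (ρ₁ ρ₂ : ℝ) {y : ℝ} (hy : y ≠ 0) : ContinuousAt (rhoFun ρ₁ ρ₂) y := by
  rcases hy.lt_or_gt with hy | hy
  · exact continuousAt_const.congr
      ((eventually_lt_nhds hy).mono fun x hx => (if_pos hx.le).symm)
  · exact continuousAt_const.congr
      ((eventually_gt_nhds hy).mono fun x hx => (if_neg hx.not_ge).symm)

lemma integrable_mul_rhoFun (ρ₁ ρ₂ : ℝ) {φ : ℝ → ℝ} (hφ : Integrable φ) :
    Integrable fun x => φ x * rhoFun ρ₁ ρ₂ x := by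
  refine hφ.mul_bdd (c := max |ρ₁| |ρ₂|)
    (Measurable.ite measurableSet_Iic measurable_const measurable_const).aestronglyMeasurable
    (ae_of_all _ fun x => ?_)
  rw [Real.norm_eq_abs, rhoFun]
  split_ifs
  · exact le_max_left _ _
  · exact le_max_right _ _

lemma integral_G_mul_eq_add {a₁ a₂ t : ℝ} (ha₁ : 0 < a₁) (ha₂ : 0 < a₂) (ht : 0 < t)
    (β y : ℝ) {g : ℝ → ℝ} (hg : Integrable g) :
    ∫ x, G a₁ a₂ β t x y * g x =
      (∫ x, heatKernel (diffusivity a₁ a₂ y * t) (x - y) * g x) +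
        ∫ x, (G a₁ a₂ β t x y - heatKernel (diffusivity a₁ a₂ y * t) (x - y)) * g x := by
  have hDt : 0 < diffusivity a₁ a₂ y * t := mul_pos (diffusivity_pos ha₁ ha₂ y) ht
  have hcont := (continuous_heatKernel (diffusivity a₁ a₂ y * t)).comp (continuous_sub_right y)
  have hK : Integrable fun x => heatKernel (diffusivity a₁ a₂ y * t) (x - y) * g x :=
    hg.bdd_mul hcont.aestronglyMeasurable (ae_of_all _ fun x => by
      rw [Real.norm_of_nonneg (heatKernel_nonneg _ _)]
      exact heatKernel_le hDt _)
  have hE : Integrable fun x =>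
      (G a₁ a₂ β t x y - heatKernel (diffusivity a₁ a₂ y * t) (x - y)) * g x :=
    hg.bdd_mul ((measurable_G a₁ a₂ β t y).sub hcont.measurable).aestronglyMeasurable
      (ae_of_all _ fun x => abs_G_sub_heatKernel_le ha₁ ha₂ ht β x y)
  rw [← integral_add hK hE]
  congr 1 with x
  ring

theorem G_delta_approximation_general (a₁ a₂ ρ₁ ρ₂ β : ℝ)
    (ha₁ : 0 < a₁) (ha₂ : 0 < a₂)
    (φ : ℝ → ℝ) (hφ : Continuous φ) (hφc : HasCompactSupport φ)
    (y : ℝ) (hy : y ≠ 0) :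
    Filter.Tendsto (fun t => ∫ x : ℝ, G a₁ a₂ β t x y * φ x * rhoFun ρ₁ ρ₂ x)
      (nhdsWithin 0 (Set.Ioi 0)) (nhds (φ y * rhoFun ρ₁ ρ₂ y)) := by
  set D := diffusivity a₁ a₂ y
  set g := fun x => φ x * rhoFun ρ₁ ρ₂ x
  have hg : Integrable g := integrable_mul_rhoFun ρ₁ ρ₂ (hφ.integrable_of_hasCompactSupport hφc)
  have hgy : ContinuousAt g y := hφ.continuousAt.mul (continuousAt_rhoFun ρ₁ ρ₂ hy)
  have hscale : Tendsto (D * ·) (𝓝[>] 0) (𝓝[>] 0) :=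
    tendsto_comap.mono_left (comap_mulLeft_nhdsGT_zero (diffusivity_pos ha₁ ha₂ y)).ge
  have hmain := (tendsto_integral_heatKernel_mul hg hgy).comp hscale
  have herr : Tendsto (fun t => ∫ x, (G a₁ a₂ β t x y - heatKernel (D * t) (x - y)) * g x)
      (𝓝[>] 0) (𝓝 0) := by
    refine tendsto_integral_mul_of_abs_le (M := fun t => (1 + |β|) * heatKernel (D * t) y) ?_ ?_ hg
    · filter_upwards [self_mem_nhdsWithin] with t ht x
      exact abs_G_sub_heatKernel_le ha₁ ha₂ ht β x y
    · simpa using ((tendsto_heatKernel_nhdsGT_zero hy).comp hscale).const_mul (1 + |β|)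
  have hsum := hmain.add herr
  rw [add_zero] at hsum
  refine hsum.congr' ?_
  filter_upwards [self_mem_nhdsWithin] with t (ht : 0 < t)
  simp only [Function.comp_apply, mul_assoc]
  exact (integral_G_mul_eq_add ha₁ ha₂ ht β y hg).symm

theorem G_delta_approximation (a₁ a₂ ρ₁ ρ₂ α β : ℝ)
    (ha₁ : 0 < a₁) (ha₂ : 0 < a₂) (hρ₁ : 0 < ρ₁) (hρ₂ : 0 < ρ₂)
    (hα : α = 1 - ρ₁ * a₁ / (ρ₂ * a₂))
    (hβ : β = (Real.sqrt a₁ + Real.sqrt a₂ * (α - 1)) /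
      (Real.sqrt a₁ - Real.sqrt a₂ * (α - 1)))
    (φ : ℝ → ℝ) (hφ : Continuous φ) (hφc : HasCompactSupport φ)
    (y : ℝ) (hy : y ≠ 0) :
    Filter.Tendsto (fun t => ∫ x : ℝ, G a₁ a₂ β t x y * φ x * rhoFun ρ₁ ρ₂ x)
      (nhdsWithin 0 (Set.Ioi 0)) (nhds (φ y * rhoFun ρ₁ ρ₂ y)) :=
  G_delta_approximation_general a₁ a₂ ρ₁ ρ₂ β ha₁ ha₂ φ hφ hφc y hy
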